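/- arXiv:1511.02904 — 2 statements merged into one kernel-verified Lean document; each statement's English description precedes it below -/
import Mathlib

section
/- Every convex n-partition with at least one empty region (non-proper partition) is a limit, in the metric d_μ, of a sequence of proper convex n-partitions. Consequently C(ℝ^d, ≤ n) is the closure of C(ℝ^d, n), i.e. a compactification of the space of proper n-partitions. -/
/-!
Cut a nonempty region `C` of the partition by the hyperplane `f = t`, for a nonzero linear
functional `f` and a value `t` of `f` on `C`, and give the part of `C` beyond it to an empty
region. As `C` is open, `f` has no maximum on `C`, so these parts decrease to `∅` as `t` increases
through `f '' C`; by continuity from above their measure tends to `0`. One cut removes one empty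
region and moves the partition by at most twice that measure in `d_μ`, so induction on the number
of empty regions and the triangle inequality for `d_μ` give arbitrarily close proper partitions.
-/

open MeasureTheory Filter

/-- A possibly non-proper convex `n`-partition of `ℝ^d`. -/
def IsConvexPartitionLE {d n : ℕ} (P : Fin n → Set (EuclideanSpace ℝ (Fin d))) : Prop :=
  (∀ i, IsOpen (P i)) ∧ (∀ i, Convex ℝ (P i)) ∧
    Pairwise (Function.onFun Disjoint P) ∧ (⋃ i, closure (P i)) = Set.univ

/-- A proper convex `n`-partition of `ℝ^d` (all regions non-empty). -/
def IsConvexPartition {d n : ℕ} (P : Fin n → Set (EuclideanSpace ℝ (Fin d))) : Prop :=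
  (∀ i, (P i).Nonempty) ∧ IsConvexPartitionLE P

open Set Topology Function

section Slicing

variable {E : Type*} [AddCommGroup E] [Module ℝ E] [TopologicalSpace E] [ContinuousAdd E]
  [ContinuousSMul ℝ E] {C : Set E} {f : E →L[ℝ] ℝ}

theorem mem_closure_inter_preimage_Ioi_apply {x : E} (hC : C ∈ 𝓝 x) (hf : f ≠ 0) :
    x ∈ closure (C ∩ f ⁻¹' Ioi (f x)) := by
  obtain ⟨w, hw⟩ : ∃ w, f w ≠ 0 := by
    by_contra! h
    exact hf (ContinuousLinearMap.ext h)
  set v := (f w)⁻¹ • w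
  have hv : f v = 1 := by simp [v, hw]
  have hpath : Tendsto (fun s : ℝ => x + s • v) (𝓝[>] 0) (𝓝 x) := by
    have hcont : Continuous fun s : ℝ => x + s • v := by fun_prop
    simpa using (hcont.tendsto 0).mono_left nhdsWithin_le_nhds
  refine mem_closure_of_tendsto hpath ((hpath.eventually hC).and ?_)
  filter_upwards [self_mem_nhdsWithin] with s hs
  simpa [hv] using hs

theorem exists_mem_apply_lt_apply {x : E} (hC : C ∈ 𝓝 x) (hf : f ≠ 0) :
    ∃ y ∈ C, f x < f y :=
  closure_nonempty_iff.1 ⟨x, mem_closure_inter_preimage_Ioi_apply hC hf⟩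

theorem subset_closure_inter_preimage_Iio_union (hC : IsOpen C) (hf : f ≠ 0) (t : ℝ) :
    C ⊆ closure (C ∩ f ⁻¹' Iio t) ∪ closure (C ∩ f ⁻¹' Ioi t) := by
  intro x hx
  rcases lt_trichotomy (f x) t with h | rfl | h
  · exact Or.inl (subset_closure ⟨hx, h⟩)
  · exact Or.inr (mem_closure_inter_preimage_Ioi_apply (hC.mem_nhds hx) hf)
  · exact Or.inr (subset_closure ⟨hx, h⟩)

theorem exists_measure_inter_preimage_Ici_lt [MeasurableSpace E] [OpensMeasurableSpace E]
    (μ : Measure E) [IsFiniteMeasure μ] (hCo : IsOpen C) (hCc : Convex ℝ C) (hC : C.Nonempty)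
    (hf : f ≠ 0) {ε : ENNReal} (hε : 0 < ε) : ∃ y ∈ C, μ (C ∩ f ⁻¹' Ici (f y)) < ε := by
  -- `f '' C` is an interval, so `atTop` on it is countably generated.
  have : OrdConnected (f '' C) :=
    convex_iff_ordConnected.1 (hCc.linear_image (f : E →ₗ[ℝ] ℝ))
  have : Nonempty (f '' C) := (hC.image f).to_subtype
  set s : f '' C → Set E := fun t => C ∩ f ⁻¹' Ici (t : ℝ)
  have hanti : Antitone s := fun t t' htt' x hx =>
    ⟨hx.1, show (t : ℝ) ≤ f x from le_trans htt' hx.2⟩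
  have hempty : ⋂ t, s t = ∅ := by
    refine eq_empty_iff_forall_notMem.2 fun x hx => ?_
    have hxC : x ∈ C := (mem_iInter.1 hx (Classical.arbitrary _)).1
    obtain ⟨y, hy, hxy⟩ := exists_mem_apply_lt_apply (hCo.mem_nhds hxC) hf
    exact hxy.not_ge (mem_iInter.1 hx ⟨f y, y, hy, rfl⟩).2
  have hmeas : ∀ t, NullMeasurableSet (s t) μ := fun t =>
    (hCo.measurableSet.inter (isClosed_Ici.preimage f.continuous).measurableSet).nullMeasurableSet
  have hlim := tendsto_measure_iInter_atTop hmeas hanti ⟨Classical.arbitrary _, measure_ne_top μ _⟩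
  rw [hempty, measure_empty] at hlim
  obtain ⟨⟨_, y, hy, rfl⟩, hyε⟩ := (hlim.eventually (gt_mem_nhds hε)).exists
  exact ⟨y, hy, hyε⟩

end Slicing

open scoped symmDiff

section PartitionDist

variable {α ι : Type*} [MeasurableSpace α] [Fintype ι]

/-- The distance `d_μ` between partitions. -/
noncomputable def partitionDist (μ : Measure α) (P Q : ι → Set α) : ℝ :=
  ∑ i, μ.real (P i ∆ Q i)

variable (μ : Measure α)

theorem partitionDist_nonneg (P Q : ι → Set α) : 0 ≤ partitionDist μ P Q :=
  Finset.sum_nonneg fun _ _ => measureReal_nonneg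

@[simp]
theorem partitionDist_self (P : ι → Set α) : partitionDist μ P P = 0 := by
  simp [partitionDist]

theorem partitionDist_triangle [IsFiniteMeasure μ] (P Q R : ι → Set α) :
    partitionDist μ P R ≤ partitionDist μ P Q + partitionDist μ Q R := by
  rw [partitionDist, partitionDist, partitionDist, ← Finset.sum_add_distrib]
  exact Finset.sum_le_sum fun i _ => measureReal_symmDiff_le _

theorem partitionDist_update_update [DecidableEq ι] {P : ι → Set α} {i₀ i₁ : ι} (hi : i₀ ≠ i₁)
    (h₁ : P i₁ = ∅) {A B : Set α} (hA : A ⊆ P i₀) :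
    partitionDist μ (update (update P i₀ A) i₁ B) P = μ.real (P i₀ \ A) + μ.real B := by
  rw [partitionDist, Fintype.sum_eq_add i₀ i₁ hi]
  · simp [update_of_ne hi, h₁, symmDiff_of_le hA, ← bot_eq_empty]
  · rintro i ⟨hi₀, hi₁⟩
    simp [update_of_ne hi₀, update_of_ne hi₁]

end PartitionDist

theorem Pairwise.disjoint_update {α ι : Type*} [DecidableEq ι] {P : ι → Set α}
    (hP : Pairwise (Disjoint on P)) {i : ι} {A : Set α} (hA : ∀ j ≠ i, Disjoint A (P j)) :
    Pairwise (Disjoint on update P i A) := by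
  intro j k hjk
  simp only [onFun, update_apply]
  split_ifs with hj hk hk
  · exact absurd (hj.trans hk.symm) hjk
  · exact hA k hk
  · exact (hA j hj).symm
  · exact hP hjk

namespace IsConvexPartitionLE

variable {d n : ℕ} {P : Fin n → Set (EuclideanSpace ℝ (Fin d))}

theorem exists_nonempty (hP : IsConvexPartitionLE P) : ∃ i, (P i).Nonempty := by
  by_contra! h
  simpa [h] using hP.2.2.2.symm

theorem update_update (hP : IsConvexPartitionLE P) {i₀ i₁ : Fin n} (hi : i₀ ≠ i₁)
    (h₁ : P i₁ = ∅) {A B : Set (EuclideanSpace ℝ (Fin d))} (hAo : IsOpen A) (hBo : IsOpen B)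
    (hAc : Convex ℝ A) (hBc : Convex ℝ B) (hA : A ⊆ P i₀) (hB : B ⊆ P i₀) (hAB : Disjoint A B)
    (hcov : P i₀ ⊆ closure A ∪ closure B) :
    IsConvexPartitionLE (update (update P i₀ A) i₁ B) := by
  obtain ⟨hPo, hPc, hPd, hPu⟩ := hP
  refine ⟨fun i => ?_, fun i => ?_, ?_, ?_⟩
  · simp only [update_apply]
    split_ifs
    exacts [hBo, hAo, hPo i]
  · simp only [update_apply]
    split_ifs
    exacts [hBc, hAc, hPc i]
  · refine (hPd.disjoint_update fun j hj => (hPd hj.symm).mono_left hA).disjoint_update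
      fun j hj => ?_
    rcases eq_or_ne j i₀ with rfl | hj₀
    · simpa using hAB.symm
    · simpa [update_of_ne hj₀] using (hPd hj₀.symm).mono_left hB
  · refine eq_univ_of_univ_subset (hPu ▸ iUnion_subset fun i => ?_)
    rcases eq_or_ne i i₁ with rfl | hi₁
    · simp [h₁]
    rcases eq_or_ne i i₀ with rfl | hi₀
    · refine (closure_minimal hcov (isClosed_closure.union isClosed_closure)).trans
        (union_subset ?_ ?_)
      · simpa [update_of_ne hi] using
          subset_iUnion (fun j => closure (update (update P i A) i₁ B j)) i
      · simpa using subset_iUnion (fun j => closure (update (update P i A) i₁ B j)) i₁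
    · simpa [update_of_ne hi₀, update_of_ne hi₁] using
        subset_iUnion (fun j => closure (update (update P i₀ A) i₁ B j)) i

theorem exists_fewer_empty_partitionDist_lt (hd : 0 < d)
    (μ : Measure (EuclideanSpace ℝ (Fin d))) [IsFiniteMeasure μ] (hP : IsConvexPartitionLE P)
    {i₁ : Fin n} (h₁ : P i₁ = ∅) {ε : ℝ} (hε : 0 < ε) :
    ∃ P', IsConvexPartitionLE P' ∧ {i | P' i = ∅} ⊂ {i | P i = ∅} ∧
      partitionDist μ P' P < ε := by
  obtain ⟨i₀, hC⟩ := hP.exists_nonempty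
  have hi : i₀ ≠ i₁ := by rintro rfl; simp [h₁] at hC
  have : Nonempty (Fin d) := ⟨⟨0, hd⟩⟩
  obtain ⟨x, hx⟩ := exists_ne (0 : EuclideanSpace ℝ (Fin d))
  obtain ⟨f, hfx⟩ := SeparatingDual.exists_ne_zero (R := ℝ) hx
  have hf : f ≠ 0 := by rintro rfl; exact hfx rfl
  have hCo := hP.1 i₀
  obtain ⟨y, hy, hyε⟩ := exists_measure_inter_preimage_Ici_lt μ hCo (hP.2.1 i₀) hC hf
    (ENNReal.ofReal_pos.2 (half_pos hε))
  set A := P i₀ ∩ f ⁻¹' Iio (f y)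
  set B := P i₀ ∩ f ⁻¹' Ioi (f y)
  have hCA : P i₀ \ A = P i₀ ∩ f ⁻¹' Ici (f y) := by ext; simp [A]
  have hBA : B ⊆ P i₀ \ A := hCA ▸ inter_subset_inter_right _ (preimage_mono Ioi_subset_Ici_self)
  have hA : A.Nonempty := by
    obtain ⟨z, hz, hzy⟩ := exists_mem_apply_lt_apply (hCo.mem_nhds hy) (neg_ne_zero.2 hf)
    exact ⟨z, hz, by simpa using hzy⟩
  have hB : B.Nonempty := exists_mem_apply_lt_apply (hCo.mem_nhds hy) hf
  have hAo : IsOpen A := hCo.inter (isOpen_Iio.preimage f.continuous)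
  have hBo : IsOpen B := hCo.inter (isOpen_Ioi.preimage f.continuous)
  have hAc : Convex ℝ A := (hP.2.1 i₀).inter (convex_halfSpace_lt f.isLinear _)
  have hBc : Convex ℝ B := (hP.2.1 i₀).inter (convex_halfSpace_gt f.isLinear _)
  have hAB : Disjoint A B := disjoint_left.2 fun z (hzA : z ∈ A) (hzB : z ∈ B) =>
    lt_asymm hzA.2 (show f y < f z from hzB.2)
  refine ⟨_, hP.update_update hi h₁ hAo hBo hAc hBc inter_subset_left inter_subset_left hAB
    (subset_closure_inter_preimage_Iio_union hCo hf (f y)), ?_, ?_⟩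
  · refine (ssubset_iff_of_subset fun i hi' => ?_).2 ⟨i₁, h₁, by simpa using hB.ne_empty⟩
    rcases eq_or_ne i i₁ with rfl | hi₁
    · simp [hB.ne_empty] at hi'
    rcases eq_or_ne i i₀ with rfl | hi₀
    · simp [update_of_ne hi₁, hA.ne_empty] at hi'
    · simpa [update_of_ne hi₀, update_of_ne hi₁] using hi'
  · have hsmall : μ.real (P i₀ \ A) < ε / 2 := hCA ▸ ENNReal.toReal_lt_of_lt_ofReal hyε
    rw [partitionDist_update_update μ hi h₁ inter_subset_left]
    linarith [measureReal_mono (μ := μ) hBA]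

theorem exists_isConvexPartition_partitionDist_lt (hd : 0 < d)
    (μ : Measure (EuclideanSpace ℝ (Fin d))) [IsFiniteMeasure μ] (hP : IsConvexPartitionLE P)
    {ε : ℝ} (hε : 0 < ε) :
    ∃ Q, IsConvexPartition Q ∧ partitionDist μ Q P < ε := by
  induction hk : {i | P i = ∅}.ncard using Nat.strong_induction_on generalizing P ε with
  | _ k ih =>
  by_cases hproper : ∀ i, (P i).Nonempty
  · exact ⟨P, ⟨hproper, hP⟩, by simpa using hε⟩
  obtain ⟨i₁, hi₁⟩ := not_forall.1 hproper
  have h₁ := not_nonempty_iff_eq_empty.1 hi₁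
  obtain ⟨P', hP', hlt, hP'P⟩ := hP.exists_fewer_empty_partitionDist_lt hd μ h₁ (half_pos hε)
  obtain ⟨Q, hQ, hQP'⟩ := ih _ (hk ▸ ncard_lt_ncard hlt) hP' (half_pos hε) rfl
  exact ⟨Q, hQ, (partitionDist_triangle μ Q P' P).trans_lt (by linarith)⟩

theorem exists_seq_isConvexPartition_tendsto (hd : 0 < d)
    (μ : Measure (EuclideanSpace ℝ (Fin d))) [IsFiniteMeasure μ] (hP : IsConvexPartitionLE P) :
    ∃ Q : ℕ → Fin n → Set (EuclideanSpace ℝ (Fin d)), (∀ k, IsConvexPartition (Q k)) ∧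
      Tendsto (fun k => partitionDist μ (Q k) P) atTop (𝓝 0) := by
  choose Q hQ hQP using fun k : ℕ =>
    hP.exists_isConvexPartition_partitionDist_lt hd μ (Nat.one_div_pos_of_nat (n := k))
  exact ⟨Q, hQ, squeeze_zero (fun k => partitionDist_nonneg μ _ _) (fun k => (hQP k).le)
    tendsto_one_div_add_atTop_nhds_zero_nat⟩

end IsConvexPartitionLE

theorem nonproper_limit_of_proper_general
    (d n : ℕ) (hd : 0 < d)
    (μ : Measure (EuclideanSpace ℝ (Fin d))) [IsFiniteMeasure μ] :
    (∀ P : Fin n → Set (EuclideanSpace ℝ (Fin d)),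
      IsConvexPartitionLE P → (∃ i, P i = ∅) →
      ∃ Q : ℕ → Fin n → Set (EuclideanSpace ℝ (Fin d)),
        (∀ k, IsConvexPartition (Q k)) ∧
        Tendsto (fun k => ∑ i, (μ (symmDiff (Q k i) (P i))).toReal)
          atTop (nhds 0)) ∧
    (∀ P : Fin n → Set (EuclideanSpace ℝ (Fin d)),
      IsConvexPartitionLE P →
      ∃ Q : ℕ → Fin n → Set (EuclideanSpace ℝ (Fin d)),
        (∀ k, IsConvexPartition (Q k)) ∧
        Tendsto (fun k => ∑ i, (μ (symmDiff (Q k i) (P i))).toReal)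
          atTop (nhds 0)) := by
  exact ⟨fun P hP _ => hP.exists_seq_isConvexPartition_tendsto hd μ,
    fun P hP => hP.exists_seq_isConvexPartition_tendsto hd μ⟩

/-- **`C(ℝ^d, ≤ n)` is the closure of `C(ℝ^d, n)`.**
For a finite positive continuous (atomless) measure `μ`, every non-proper convex
`n`-partition (one with an empty region) is a `d_μ`-limit of proper convex `n`-partitions;
consequently every element of `C(ℝ^d, ≤ n)` is such a limit, i.e. `C(ℝ^d, ≤ n)` is a
compactification of the space of proper `n`-partitions. -/
theorem nonproper_limit_of_proper
    (d n : ℕ) (hd : 0 < d)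
    (μ : Measure (EuclideanSpace ℝ (Fin d))) [IsFiniteMeasure μ] [NullSingletonClass μ]
    (hpos : ∀ U : Set (EuclideanSpace ℝ (Fin d)), IsOpen U → U.Nonempty → 0 < μ U) :
    (∀ P : Fin n → Set (EuclideanSpace ℝ (Fin d)),
      IsConvexPartitionLE P → (∃ i, P i = ∅) →
      ∃ Q : ℕ → Fin n → Set (EuclideanSpace ℝ (Fin d)),
        (∀ k, IsConvexPartition (Q k)) ∧
        Tendsto (fun k => ∑ i, (μ (symmDiff (Q k i) (P i))).toReal)
          atTop (nhds 0)) ∧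
    (∀ P : Fin n → Set (EuclideanSpace ℝ (Fin d)),
      IsConvexPartitionLE P →
      ∃ Q : ℕ → Fin n → Set (EuclideanSpace ℝ (Fin d)),
        (∀ k, IsConvexPartition (Q k)) ∧
        Tendsto (fun k => ∑ i, (μ (symmDiff (Q k i) (P i))).toReal)
          atTop (nhds 0)) :=
  nonproper_limit_of_proper_general d n hd μ
end

section
/- The space C(ℝ^d, ≤ 2) of possibly non-proper convex 2-partitions of ℝ^d is homeomorphic to the sphere S^d, and the subspace C(ℝ^d, 2) of proper 2-partitions is obtained by removing two points; in particular C(ℝ^d, 2) is homotopy equivalent to S^{d−1}. -/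
open MeasureTheory
open scoped RealInnerProductSpace

open Set Filter Topology

/-!
A vector `c ∈ ℝ^{d+1}` defines the affine function `x ↦ c · (1, x)` on `ℝ^d`; its two open sign
regions form a convex `2`-partition, proper unless `c = ±e₀`. Every convex `2`-partition arises this
way: Hahn–Banach separates its two open convex parts by a hyperplane, and they fill the two open
sides because an open convex set is the interior of its closure. On the unit sphere `c` is
determined by the partition, since for `c ≠ c'` the open cone `{y | ⟪c, y⟫ > 0 > ⟪c', y⟫}` contains
a multiple of some `(1, x)`.

Off the null hyperplane `{x | c · (1, x) = 0}`, membership of `x` in the regions is locally constant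
in `c`, so `d_μ` is continuous in `c` by dominated convergence. It separates points because open
sets have positive measure, and the sphere is compact, so the inverse is continuous too. Finally
the sphere minus the poles `±e₀` retracts onto the equator `S^{d-1}` through
`(t u, v) / ‖(t u, v)‖`, `t ∈ [0, 1]`, where `c = (u, v)`.
-/

section ConvexOpen

variable {E : Type*} [AddCommGroup E] [Module ℝ E] [TopologicalSpace E] [IsTopologicalAddGroup E]
  [ContinuousSMul ℝ E] {A B S : Set E}

lemma Convex.interior_closure_eq_of_isOpen (hA : Convex ℝ A) (hAo : IsOpen A) :
    interior (closure A) = A := by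
  rcases A.eq_empty_or_nonempty with rfl | hne
  · simp
  · rw [hA.interior_closure_eq_interior_of_nonempty_interior (by rwa [hAo.interior_eq]),
      hAo.interior_eq]

lemma Convex.eq_of_subset_of_disjoint (hA : Convex ℝ A) (hAo : IsOpen A) (hS : IsOpen S)
    (hAS : A ⊆ S) (hSB : Disjoint S B) (hcover : closure A ∪ closure B = univ) : A = S := by
  refine hAS.antisymm ?_
  rw [← hA.interior_closure_eq_of_isOpen hAo]
  refine interior_maximal (fun x hx => ?_) hS
  exact (hcover ▸ mem_univ x).resolve_right (disjoint_left.1 (hSB.closure_right hS) hx)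

lemma measure_symmDiff_pos_of_ne [MeasurableSpace E] {μ : Measure E}
    (hpos : ∀ U : Set E, IsOpen U → U.Nonempty → 0 < μ U) (hA : Convex ℝ A) (hAo : IsOpen A)
    (hB : Convex ℝ B) (hBo : IsOpen B) (hne : A ≠ B) : 0 < μ (symmDiff A B) := by
  wlog hAB : ¬ A ⊆ B generalizing A B
  · rw [symmDiff_comm]
    exact this hB hBo hA hAo hne.symm fun hBA => hne ((not_not.1 hAB).antisymm hBA)
  have hdiff : (A \ closure B).Nonempty := by
    by_contra! h
    exact hAB ((interior_maximal (sdiff_eq_empty.1 h) hAo).trans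
      (hB.interior_closure_eq_of_isOpen hBo).le)
  refine (hpos _ (hAo.sdiff isClosed_closure) hdiff).trans_le (measure_mono fun x hx => ?_)
  exact Or.inl ⟨hx.1, fun h => hx.2 (subset_closure h)⟩

end ConvexOpen

lemma exists_pos_forall_lt_imp_dist_lt {X : Type*} [PseudoMetricSpace X] [CompactSpace X]
    {G : X → ℝ} (hG : Continuous G) {x : X} (hpos : ∀ y, x ≠ y → 0 < G y) {ε : ℝ}
    (hε : 0 < ε) : ∃ δ, 0 < δ ∧ ∀ y, G y < δ → dist x y < ε := by
  have hK : IsClosed {y | ε ≤ dist x y} := isClosed_le continuous_const (by fun_prop)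
  obtain ⟨δ, hδ, hle⟩ := hK.isCompact.exists_forall_le' hG.continuousOn (a := 0)
    fun y (hy : ε ≤ dist x y) => hpos y (by rintro rfl; simp at hy; linarith)
  exact ⟨δ, hδ, fun y hy => not_le.1 fun h => (hle y h).not_gt hy⟩

/-- The metric `d_μ` on partitions. -/
def symmDiffDist {α : Type*} [MeasurableSpace α] (μ : Measure α) {n : ℕ}
    (P Q : Fin n → Set α) : ℝ :=
  ∑ i, (μ (symmDiff (P i) (Q i))).toReal

namespace ConvexTwoPartition

local notation "𝔼" n:max => EuclideanSpace ℝ (Fin n)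

variable {d : ℕ}

def cons (u : ℝ) (a : 𝔼 d) : 𝔼 (d + 1) := WithLp.toLp 2 (Fin.cons u a)

def tail (c : 𝔼 (d + 1)) : 𝔼 d := WithLp.toLp 2 (Fin.tail c)

@[simp] lemma cons_apply_zero (u : ℝ) (a : 𝔼 d) : cons u a 0 = u := rfl

@[simp] lemma tail_cons (u : ℝ) (a : 𝔼 d) : tail (cons u a) = a := rfl

@[simp] lemma cons_apply_zero_tail (c : 𝔼 (d + 1)) : cons (c 0) (tail c) = c := by
  ext i; exact Fin.cases rfl (fun _ => rfl) i

@[simp] lemma cons_zero_zero : cons 0 (0 : 𝔼 d) = 0 := by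
  ext i; exact Fin.cases rfl (fun _ => rfl) i

lemma smul_cons (r u : ℝ) (a : 𝔼 d) : r • cons u a = cons (r * u) (r • a) := by
  ext i; exact Fin.cases rfl (fun _ => rfl) i

lemma tail_smul (r : ℝ) (c : 𝔼 (d + 1)) : tail (r • c) = r • tail c := rfl

lemma ne_zero_of_tail_ne_zero {v : 𝔼 (d + 1)} (hv : tail v ≠ 0) : v ≠ 0 := by
  rintro rfl; exact hv rfl

lemma inner_cons_cons (u v : ℝ) (a b : 𝔼 d) : ⟪cons u a, cons v b⟫ = u * v + ⟪a, b⟫ := by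
  simp [PiLp.inner_apply, Fin.sum_univ_succ, cons, mul_comm]

lemma norm_cons_sq (u : ℝ) (a : 𝔼 d) : ‖cons u a‖ ^ 2 = u ^ 2 + ‖a‖ ^ 2 := by
  rw [← real_inner_self_eq_norm_sq, inner_cons_cons, real_inner_self_eq_norm_sq, sq, sq]

lemma norm_cons_zero (a : 𝔼 d) : ‖cons 0 a‖ = ‖a‖ := by
  rw [← pow_left_inj₀ (norm_nonneg _) (norm_nonneg _) two_ne_zero, norm_cons_sq]; ring

lemma inner_cons_one (c : 𝔼 (d + 1)) (x : 𝔼 d) : ⟪c, cons 1 x⟫ = c 0 + ⟪tail c, x⟫ := by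
  conv_lhs => rw [← cons_apply_zero_tail c]
  rw [inner_cons_cons, mul_one]

lemma continuous_tail : Continuous (tail : 𝔼 (d + 1) → 𝔼 d) := by
  unfold tail; fun_prop

@[fun_prop]
lemma continuous_cons {X : Type*} [TopologicalSpace X] {f : X → ℝ} {g : X → 𝔼 d}
    (hf : Continuous f) (hg : Continuous g) : Continuous fun x => cons (f x) (g x) := by
  unfold cons; fun_prop

def halfSpaces (c : 𝔼 (d + 1)) : Fin 2 → Set (𝔼 d) :=
  ![{x | ⟪c, cons 1 x⟫ < 0}, {x | 0 < ⟪c, cons 1 x⟫}]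

lemma isOpen_halfSpaces (c : 𝔼 (d + 1)) (i : Fin 2) : IsOpen (halfSpaces c i) := by
  have : Continuous fun x : 𝔼 d => ⟪c, cons 1 x⟫ := by fun_prop
  fin_cases i
  · exact isOpen_lt this continuous_const
  · exact isOpen_lt continuous_const this

lemma convex_halfSpaces (c : 𝔼 (d + 1)) (i : Fin 2) : Convex ℝ (halfSpaces c i) := by
  fin_cases i
  · simpa [halfSpaces, inner_cons_one, ← lt_neg_iff_add_neg']
      using convex_halfSpace_lt (innerₛₗ ℝ (tail c)).isLinear (-c 0)
  · simpa [halfSpaces, inner_cons_one, neg_lt_iff_pos_add']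
      using convex_halfSpace_gt (innerₛₗ ℝ (tail c)).isLinear (-c 0)

lemma pairwise_disjoint_halfSpaces (c : 𝔼 (d + 1)) :
    Pairwise (Function.onFun Disjoint (halfSpaces c)) := by
  have h : Disjoint (halfSpaces c 0) (halfSpaces c 1) :=
    disjoint_left.2 fun _ h₀ h₁ => lt_asymm (α := ℝ) h₀ h₁
  intro i j hij
  fin_cases i <;> fin_cases j <;> first | exact absurd rfl hij | exact h | exact h.symm

lemma halfSpaces_smul {r : ℝ} (hr : 0 < r) (c : 𝔼 (d + 1)) :
    halfSpaces (r • c) = halfSpaces c := by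
  funext i
  fin_cases i <;> simp [halfSpaces, real_inner_smul_left, mul_neg_iff, hr, hr.not_gt]

lemma inner_cons_one_add_smul_tail (c : 𝔼 (d + 1)) (x : 𝔼 d) (t : ℝ) :
    ⟪c, cons 1 (x + t • tail c)⟫ = ⟪c, cons 1 x⟫ + t * ‖tail c‖ ^ 2 := by
  simp only [inner_cons_one, inner_add_right, real_inner_smul_right, real_inner_self_eq_norm_sq]
  ring

lemma tail_ne_zero_of_inner_cons_one_eq_zero {c : 𝔼 (d + 1)} (hc : c ≠ 0) {x : 𝔼 d}
    (hx : ⟪c, cons 1 x⟫ = 0) : tail c ≠ 0 := by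
  intro ht
  rw [inner_cons_one, ht, inner_zero_left, add_zero] at hx
  exact hc (by rw [← cons_apply_zero_tail c, hx, ht, cons_zero_zero])

lemma iUnion_closure_halfSpaces {c : 𝔼 (d + 1)} (hc : c ≠ 0) :
    ⋃ i, closure (halfSpaces c i) = univ := by
  refine eq_univ_of_forall fun x => ?_
  simp only [mem_iUnion, Fin.exists_fin_two]
  rcases lt_trichotomy ⟪c, cons 1 x⟫ 0 with h | h | h
  · exact Or.inl (subset_closure h)
  · have ha := tail_ne_zero_of_inner_cons_one_eq_zero hc h
    refine Or.inl (mem_closure_of_tendsto (f := fun t : ℝ => x + t • tail c) (b := 𝓝[<] 0) ?_ ?_)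
    · have : Tendsto (fun t : ℝ => x + t • tail c) (𝓝 0) (𝓝 (x + (0 : ℝ) • tail c)) :=
        (by fun_prop : Continuous fun t : ℝ => x + t • tail c).tendsto 0
      simpa using this.mono_left nhdsWithin_le_nhds
    · refine eventually_nhdsWithin_of_forall fun t (ht : t < 0) => ?_
      change ⟪c, cons 1 (x + t • tail c)⟫ < 0
      rw [inner_cons_one_add_smul_tail, h, zero_add]
      exact mul_neg_of_neg_of_pos ht (by positivity)
  · exact Or.inr (subset_closure h)

lemma isConvexPartitionLE_halfSpaces {c : 𝔼 (d + 1)} (hc : c ≠ 0) :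
    IsConvexPartitionLE (halfSpaces c) :=
  ⟨isOpen_halfSpaces c, convex_halfSpaces c, pairwise_disjoint_halfSpaces c,
    iUnion_closure_halfSpaces hc⟩

lemma halfSpaces_nonempty_iff (c : 𝔼 (d + 1)) :
    (∀ i, (halfSpaces c i).Nonempty) ↔ tail c ≠ 0 := by
  constructor
  · rintro h ht
    obtain ⟨⟨x, hx⟩, ⟨y, hy⟩⟩ := And.intro (h 0) (h 1)
    simp only [halfSpaces, Matrix.cons_val_zero, Matrix.cons_val_one, mem_ofPred_eq,
      inner_cons_one, ht, inner_zero_left, add_zero] at hx hy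
    linarith
  · intro ht i
    have hpos : 0 < ‖tail c‖ ^ 2 := by positivity
    have hvalue (s : ℝ) : ⟪c, cons 1 (((s - c 0) / ‖tail c‖ ^ 2) • tail c)⟫ = s := by
      rw [← zero_add ((_ / _) • tail c), inner_cons_one_add_smul_tail,
        div_mul_cancel₀ _ hpos.ne', inner_cons_one, inner_zero_right]
      ring
    fin_cases i
    · exact ⟨_, show ⟪c, _⟫ < 0 by rw [hvalue (-1)]; norm_num⟩
    · exact ⟨_, show 0 < ⟪c, _⟫ by rw [hvalue 1]; norm_num⟩

lemma exists_mem_apply_zero_ne_zero {U : Set (𝔼 (d + 1))} (hU : IsOpen U) (hne : U.Nonempty) :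
    ∃ y ∈ U, y 0 ≠ 0 := by
  by_contra! h
  set K := LinearMap.ker (EuclideanSpace.proj (0 : Fin (d + 1)) : StrongDual ℝ _).toLinearMap
  have hK : (interior (K : Set (𝔼 (d + 1)))).Nonempty :=
    hne.mono (interior_maximal (fun y hy => h y hy) hU)
  have : cons 1 (0 : 𝔼 d) ∈ K := by
    rw [Submodule.eq_top_of_nonempty_interior' _ hK]; trivial
  exact one_ne_zero (LinearMap.mem_ker.1 this)

lemma eq_of_halfSpaces_eq {c c' : 𝔼 (d + 1)} (hc : ‖c‖ = 1) (hc' : ‖c'‖ = 1)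
    (h : halfSpaces c = halfSpaces c') : c = c' := by
  by_contra hne
  have hsep : 0 < ⟪c, c - c'⟫ ∧ ⟪c', c - c'⟫ < 0 := by
    have hpos : 0 < ‖c - c'‖ ^ 2 := by have := sub_ne_zero.2 hne; positivity
    have hsum : ⟪c, c - c'⟫ + ⟪c', c - c'⟫ = 0 := by
      simp only [inner_sub_right, real_inner_self_eq_norm_sq, hc, hc', real_inner_comm c c']
      ring
    rw [← real_inner_self_eq_norm_sq, inner_sub_left] at hpos
    constructor <;> linarith
  obtain ⟨y, ⟨hy, hy'⟩, hy0⟩ :=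
    exists_mem_apply_zero_ne_zero (U := {y | 0 < ⟪c, y⟫} ∩ {y | ⟪c', y⟫ < 0})
      ((isOpen_lt continuous_const (by fun_prop)).inter (isOpen_lt (by fun_prop) continuous_const))
      ⟨c - c', hsep⟩
  have hy_eq : y = y 0 • cons 1 ((y 0)⁻¹ • tail y) := by
    rw [smul_cons, smul_smul, mul_one, mul_inv_cancel₀ hy0, one_smul, cons_apply_zero_tail]
  set x := (y 0)⁻¹ • tail y
  have hx : 0 < ⟪c, cons 1 x⟫ ↔ 0 < ⟪c', cons 1 x⟫ := Set.ext_iff.1 (congrFun h 1) x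
  rw [mem_ofPred_eq, hy_eq, real_inner_smul_right] at hy hy'
  rcases lt_or_gt_of_ne hy0 with hneg | hpos
  · have := (not_congr hx).1 (by nlinarith)
    nlinarith
  · have := hx.1 (by nlinarith)
    nlinarith

lemma exists_halfSpaces_eq {Q : Fin 2 → Set (𝔼 d)} (hQ : IsConvexPartitionLE Q) :
    ∃ c : 𝔼 (d + 1), ‖c‖ = 1 ∧ halfSpaces c = Q := by
  obtain ⟨hopen, hconv, hdisj, hcover⟩ := hQ
  have hcover' : closure (Q 0) ∪ closure (Q 1) = univ := by
    rw [← hcover]; ext; simp [Fin.exists_fin_two]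
  obtain ⟨f, u, hf₀, hf₁⟩ := geometric_hahn_banach_open_open (hconv 0) (hopen 0) (hconv 1)
    (hopen 1) (hdisj zero_ne_one)
  set c := cons (-u) ((InnerProductSpace.toDual ℝ _).symm f)
  have hform (x : 𝔼 d) : ⟪c, cons 1 x⟫ = f x - u := by
    rw [inner_cons_cons, InnerProductSpace.toDual_symm_apply]; ring
  have hc : halfSpaces c = Q := by
    funext i
    fin_cases i
    · refine ((hconv 0).eq_of_subset_of_disjoint (hopen 0) (isOpen_halfSpaces c 0) ?_ ?_
        hcover').symm
      · exact fun x hx => show ⟪c, _⟫ < 0 by linarith [hform x, hf₀ x hx]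
      · exact disjoint_left.2 fun x (hx : ⟪c, _⟫ < 0) hx' => by linarith [hform x, hf₁ x hx']
    · refine ((hconv 1).eq_of_subset_of_disjoint (hopen 1) (isOpen_halfSpaces c 1) ?_ ?_
        (union_comm _ _ ▸ hcover')).symm
      · exact fun x hx => show 0 < ⟪c, _⟫ by linarith [hform x, hf₁ x hx]
      · exact disjoint_left.2 fun x (hx : 0 < ⟪c, _⟫) hx' => by linarith [hform x, hf₀ x hx']
  have hc₀ : c ≠ 0 := by
    rintro hc₀
    simpa [← hc, hc₀, halfSpaces] using hcover'.symm
  exact ⟨NormedSpace.normalize c, NormedSpace.norm_normalize_eq_one_iff.2 hc₀,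
    by rw [NormedSpace.normalize, halfSpaces_smul (by positivity), hc]⟩

section Measure

variable (μ : Measure (𝔼 d))

lemma measure_inner_cons_one_eq_zero
    (hplane : ∀ (a : 𝔼 d) (b : ℝ), a ≠ 0 → μ {x | ⟪a, x⟫ = b} = 0)
    {c : 𝔼 (d + 1)} (hc : c ≠ 0) : μ {x | ⟪c, cons 1 x⟫ = 0} = 0 := by
  rcases eq_empty_or_nonempty {x | ⟪c, cons 1 x⟫ = 0} with h | ⟨x₀, hx₀⟩
  · rw [h, measure_empty]
  · convert hplane (tail c) (-c 0) (tail_ne_zero_of_inner_cons_one_eq_zero hc hx₀) using 2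
    ext x
    simp only [mem_ofPred_eq, inner_cons_one]
    constructor <;> intro <;> linarith

lemma eventually_mem_halfSpaces_iff {c₀ : 𝔼 (d + 1)} {x : 𝔼 d} (hx : ⟪c₀, cons 1 x⟫ ≠ 0)
    (i : Fin 2) : ∀ᶠ c in 𝓝 c₀, x ∈ halfSpaces c i ↔ x ∈ halfSpaces c₀ i := by
  have hcont : Continuous fun c : 𝔼 (d + 1) => ⟪c, cons 1 x⟫ := by fun_prop
  rcases hx.lt_or_gt with h | h
  · filter_upwards [hcont.continuousAt.eventually_lt continuousAt_const h] with c hc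
    fin_cases i <;> simp [halfSpaces, hc, h, hc.not_gt, h.not_gt]
  · filter_upwards [continuousAt_const.eventually_lt hcont.continuousAt h] with c hc
    fin_cases i <;> simp [halfSpaces, hc, h, hc.not_gt, h.not_gt]

lemma tendsto_measure_symmDiff_halfSpaces [IsFiniteMeasure μ]
    (hplane : ∀ (a : 𝔼 d) (b : ℝ), a ≠ 0 → μ {x | ⟪a, x⟫ = b} = 0)
    {A : Set (𝔼 d)} (hA : MeasurableSet A) {c₀ : 𝔼 (d + 1)} (hc₀ : c₀ ≠ 0) (i : Fin 2) :
    Tendsto (fun c => μ (symmDiff A (halfSpaces c i))) (𝓝 c₀)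
      (𝓝 (μ (symmDiff A (halfSpaces c₀ i)))) := by
  refine tendsto_measure_of_ae_tendsto_indicator_of_isFiniteMeasure _
    (hA.symmDiff (isOpen_halfSpaces c₀ i).measurableSet)
    (fun c => hA.symmDiff (isOpen_halfSpaces c i).measurableSet) ?_
  filter_upwards [measure_eq_zero_iff_ae_notMem.1 (measure_inner_cons_one_eq_zero μ hplane hc₀)]
    with x hx
  filter_upwards [eventually_mem_halfSpaces_iff hx i] with c hc
  simp only [mem_symmDiff, hc]

lemma continuousAt_symmDiffDist_halfSpaces [IsFiniteMeasure μ]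
    (hplane : ∀ (a : 𝔼 d) (b : ℝ), a ≠ 0 → μ {x | ⟪a, x⟫ = b} = 0)
    {P : Fin 2 → Set (𝔼 d)} (hP : ∀ i, MeasurableSet (P i)) {c₀ : 𝔼 (d + 1)} (hc₀ : c₀ ≠ 0) :
    ContinuousAt (fun c => symmDiffDist μ P (halfSpaces c)) c₀ :=
  tendsto_finsetSum _ fun i _ => (ENNReal.tendsto_toReal (measure_ne_top _ _)).comp
    (tendsto_measure_symmDiff_halfSpaces μ hplane (hP i) hc₀ i)

lemma symmDiffDist_halfSpaces_pos [IsFiniteMeasure μ]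
    (hpos : ∀ U : Set (𝔼 d), IsOpen U → U.Nonempty → 0 < μ U)
    {c c' : 𝔼 (d + 1)} (hc : ‖c‖ = 1) (hc' : ‖c'‖ = 1) (hne : c ≠ c') :
    0 < symmDiffDist μ (halfSpaces c) (halfSpaces c') := by
  obtain ⟨i, hi⟩ : ∃ i, halfSpaces c i ≠ halfSpaces c' i := by
    by_contra! h
    exact hne (eq_of_halfSpaces_eq hc hc' (funext h))
  refine Finset.sum_pos' (fun j _ => ENNReal.toReal_nonneg) ⟨i, Finset.mem_univ i, ?_⟩
  exact ENNReal.toReal_pos (measure_symmDiff_pos_of_ne hpos (convex_halfSpaces c i)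
    (isOpen_halfSpaces c i) (convex_halfSpaces c' i) (isOpen_halfSpaces c' i) hi).ne'
    (measure_ne_top _ _)

end Measure

section Poles

variable (d) in
def north : Metric.sphere (0 : 𝔼 (d + 1)) 1 :=
  ⟨cons 1 0, by
    rw [mem_sphere_zero_iff_norm, ← pow_left_inj₀ (norm_nonneg _) zero_le_one two_ne_zero,
      norm_cons_sq]; simp⟩

variable (d) in
def south : Metric.sphere (0 : 𝔼 (d + 1)) 1 :=
  ⟨cons (-1) 0, by
    rw [mem_sphere_zero_iff_norm, ← pow_left_inj₀ (norm_nonneg _) zero_le_one two_ne_zero,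
      norm_cons_sq]; simp⟩

lemma north_ne_south : north d ≠ south d := fun h => by
  have := congrArg (fun c : Metric.sphere (0 : 𝔼 (d + 1)) 1 => (c : 𝔼 (d + 1)) 0) h
  norm_num [north, south] at this

lemma tail_ne_zero_iff {c : Metric.sphere (0 : 𝔼 (d + 1)) 1} :
    tail (c : 𝔼 (d + 1)) ≠ 0 ↔ c ≠ north d ∧ c ≠ south d := by
  have hc : (c : 𝔼 (d + 1)) 0 ^ 2 + ‖tail (c : 𝔼 (d + 1))‖ ^ 2 = 1 := by
    rw [← norm_cons_sq, cons_apply_zero_tail, mem_sphere_zero_iff_norm.1 c.2, one_pow]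
  rw [← not_or, not_iff_not]
  constructor
  · intro ht
    rw [ht, norm_zero, zero_pow two_ne_zero, add_zero, sq_eq_one_iff] at hc
    have hcons := cons_apply_zero_tail (c : 𝔼 (d + 1))
    rw [ht] at hcons
    rcases hc with h | h
    · exact Or.inl (Subtype.ext (by rw [← hcons, h]; rfl))
    · exact Or.inr (Subtype.ext (by rw [← hcons, h]; rfl))
  · rintro (rfl | rfl) <;> rfl

end Poles

variable (d) in
abbrev SphereMinusPoles :=
  {c : Metric.sphere (0 : 𝔼 (d + 1)) 1 // c ≠ north d ∧ c ≠ south d}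

namespace SphereMinusPoles

noncomputable def normalize (v : 𝔼 (d + 1)) (hv : tail v ≠ 0) : SphereMinusPoles d :=
  ⟨⟨NormedSpace.normalize v, mem_sphere_zero_iff_norm.2
      (NormedSpace.norm_normalize_eq_one_iff.2 (ne_zero_of_tail_ne_zero hv))⟩,
    tail_ne_zero_iff.1 (by
      change tail (‖v‖⁻¹ • v) ≠ 0
      rw [tail_smul]
      exact smul_ne_zero (inv_ne_zero (norm_ne_zero_iff.2 (ne_zero_of_tail_ne_zero hv))) hv)⟩

lemma continuous_normalize {X : Type*} [TopologicalSpace X] {f : X → 𝔼 (d + 1)}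
    (hf : Continuous f) (h : ∀ x, tail (f x) ≠ 0) : Continuous fun x => normalize (f x) (h x) :=
  (((hf.norm.inv₀ fun x => norm_ne_zero_iff.2 (ne_zero_of_tail_ne_zero (h x))).smul
    hf).subtype_mk _).subtype_mk _

lemma continuous_coe : Continuous fun c : SphereMinusPoles d => (c : 𝔼 (d + 1)) :=
  continuous_subtype_val.comp continuous_subtype_val

variable (d)

noncomputable def toEquator : C(SphereMinusPoles d, Metric.sphere (0 : 𝔼 d) 1) where
  toFun c := ⟨NormedSpace.normalize (tail (c : 𝔼 (d + 1))), mem_sphere_zero_iff_norm.2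
    (NormedSpace.norm_normalize_eq_one_iff.2 (tail_ne_zero_iff.2 c.2))⟩
  continuous_toFun := by
    have ht := continuous_tail.comp (continuous_coe (d := d))
    exact ((ht.norm.inv₀ fun c => norm_ne_zero_iff.2 (tail_ne_zero_iff.2 c.2)).smul
      ht).subtype_mk _

def ofEquator : C(Metric.sphere (0 : 𝔼 d) 1, SphereMinusPoles d) where
  toFun b := ⟨⟨cons 0 b, mem_sphere_zero_iff_norm.2 ((norm_cons_zero _).trans
      (norm_eq_of_mem_sphere b))⟩, tail_ne_zero_iff.1 (ne_zero_of_mem_unit_sphere b)⟩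
  continuous_toFun :=
    ((continuous_cons continuous_const continuous_subtype_val).subtype_mk _).subtype_mk _

noncomputable def retractToEquator :
    ((ofEquator d).comp (toEquator d)).Homotopy (ContinuousMap.id (SphereMinusPoles d)) where
  toFun p := normalize (cons (p.1 * (p.2 : 𝔼 (d + 1)) 0) (tail (p.2 : 𝔼 (d + 1))))
    (tail_ne_zero_iff.2 p.2.2)
  continuous_toFun := continuous_normalize
    (continuous_cons (by fun_prop) (continuous_tail.comp (continuous_coe.comp continuous_snd))) _
  map_zero_left c := by
    ext1; ext1
    simp [normalize, ofEquator, toEquator, NormedSpace.normalize, smul_cons, norm_cons_zero]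
  map_one_left c := by
    ext1; ext1
    simp [normalize, NormedSpace.normalize_eq_self_of_norm_eq_one (norm_eq_of_mem_sphere c.1)]

noncomputable def homotopyEquivEquator :
    ContinuousMap.HomotopyEquiv (SphereMinusPoles d) (Metric.sphere (0 : 𝔼 d) 1) where
  toFun := toEquator d
  invFun := ofEquator d
  left_inv := ⟨retractToEquator d⟩
  right_inv := by
    have : (toEquator d).comp (ofEquator d) = ContinuousMap.id _ := by
      ext b : 2
      change NormedSpace.normalize (tail (cons 0 (b : 𝔼 d))) = b
      rw [tail_cons, NormedSpace.normalize_eq_self_of_norm_eq_one (norm_eq_of_mem_sphere b)]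
    rw [this]

end SphereMinusPoles

end ConvexTwoPartition

open ConvexTwoPartition in
theorem space_of_two_partitions_general
    (d : ℕ)
    (μ : Measure (EuclideanSpace ℝ (Fin d))) [IsFiniteMeasure μ]
    (hpos : ∀ U : Set (EuclideanSpace ℝ (Fin d)), IsOpen U → U.Nonempty → 0 < μ U)
    (hplane : ∀ (a : EuclideanSpace ℝ (Fin d)) (b : ℝ), a ≠ 0 →
      μ {x | ⟪a, x⟫ = b} = 0) :
    ∃ f : (Metric.sphere (0 : EuclideanSpace ℝ (Fin (d + 1))) 1) →
        (Fin 2 → Set (EuclideanSpace ℝ (Fin d))),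
      (∀ c, IsConvexPartitionLE (f c)) ∧
      (∀ P : Fin 2 → Set (EuclideanSpace ℝ (Fin d)),
        IsConvexPartitionLE P → ∃! c, f c = P) ∧
      (∀ c, ∀ ε : ℝ, 0 < ε → ∃ δ : ℝ, 0 < δ ∧ ∀ c', dist c c' < δ →
        ∑ i, (μ (symmDiff (f c i) (f c' i))).toReal < ε) ∧
      (∀ c, ∀ ε : ℝ, 0 < ε → ∃ δ : ℝ, 0 < δ ∧ ∀ c',
        ∑ i, (μ (symmDiff (f c i) (f c' i))).toReal < δ → dist c c' < ε) ∧
      ∃ c₁ c₂ : (Metric.sphere (0 : EuclideanSpace ℝ (Fin (d + 1))) 1),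
        c₁ ≠ c₂ ∧
        (∀ c, IsConvexPartition (f c) ↔ (c ≠ c₁ ∧ c ≠ c₂)) ∧
        Nonempty (ContinuousMap.HomotopyEquiv
          {c : (Metric.sphere (0 : EuclideanSpace ℝ (Fin (d + 1))) 1) // c ≠ c₁ ∧ c ≠ c₂}
          (Metric.sphere (0 : EuclideanSpace ℝ (Fin d)) 1)) := by
  have hne (c : Metric.sphere (0 : EuclideanSpace ℝ (Fin (d + 1))) 1) :
      (c : EuclideanSpace ℝ (Fin (d + 1))) ≠ 0 := ne_zero_of_mem_unit_sphere c
  have hdist (c : Metric.sphere (0 : EuclideanSpace ℝ (Fin (d + 1))) 1) :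
      Continuous fun c' : Metric.sphere (0 : EuclideanSpace ℝ (Fin (d + 1))) 1 =>
        symmDiffDist μ (halfSpaces c) (halfSpaces c') :=
    continuous_iff_continuousAt.2 fun c' => (continuousAt_symmDiffDist_halfSpaces μ hplane
      (fun i => (isOpen_halfSpaces _ i).measurableSet) (hne c')).comp
      continuous_subtype_val.continuousAt
  refine ⟨fun c => halfSpaces c, fun c => isConvexPartitionLE_halfSpaces (hne c), fun Q hQ => ?_,
    fun c ε hε => ?_, fun c ε hε => ?_, north d, south d, north_ne_south, fun c => ?_,
    ⟨SphereMinusPoles.homotopyEquivEquator d⟩⟩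
  · obtain ⟨c, hc, rfl⟩ := exists_halfSpaces_eq hQ
    exact ⟨⟨c, mem_sphere_zero_iff_norm.2 hc⟩, rfl, fun c' hc' =>
      Subtype.ext (eq_of_halfSpaces_eq (norm_eq_of_mem_sphere c') hc hc')⟩
  · have h₀ : symmDiffDist μ (halfSpaces c) (halfSpaces c) = 0 := by simp [symmDiffDist]
    obtain ⟨δ, hδ, h⟩ := Metric.eventually_nhds_iff.1
      (((hdist c).tendsto c).eventually_lt_const (h₀ ▸ hε))
    exact ⟨δ, hδ, fun c' hc' => h (by rwa [dist_comm])⟩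
  · exact exists_pos_forall_lt_imp_dist_lt (hdist c) (fun c' hc' =>
      symmDiffDist_halfSpaces_pos μ hpos (norm_eq_of_mem_sphere c) (norm_eq_of_mem_sphere c')
        (Subtype.coe_injective.ne hc')) hε
  · rw [IsConvexPartition, halfSpaces_nonempty_iff, tail_ne_zero_iff]
    exact and_iff_left (isConvexPartitionLE_halfSpaces (hne c))

/-- **`C(ℝ^d, ≤ 2)` is homeomorphic to `S^d`, and `C(ℝ^d, 2)` is obtained by removing two
points, hence is homotopy equivalent to `S^(d-1)`.**  Concretely: there is a bijection `f`
from the unit sphere `S^d ⊂ ℝ^(d+1)` onto the set of possibly non-proper `2`-partitions of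
`ℝ^d` which is continuous with continuous inverse with respect to the metric
`d_μ(P,P′) = Σᵢ μ(Pᵢ △ P′ᵢ)`; moreover there are two points `c₁ ≠ c₂` of the sphere such
that `f c` is a proper `2`-partition exactly when `c ∉ {c₁, c₂}`, and the sphere minus these
two points is homotopy equivalent to `S^(d-1)`. -/
theorem space_of_two_partitions
    (d : ℕ) (hd : 0 < d)
    (μ : Measure (EuclideanSpace ℝ (Fin d))) [IsFiniteMeasure μ]
    (hpos : ∀ U : Set (EuclideanSpace ℝ (Fin d)), IsOpen U → U.Nonempty → 0 < μ U)
    (hplane : ∀ (a : EuclideanSpace ℝ (Fin d)) (b : ℝ), a ≠ 0 →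
      μ {x | ⟪a, x⟫ = b} = 0) :
    ∃ f : (Metric.sphere (0 : EuclideanSpace ℝ (Fin (d + 1))) 1) →
        (Fin 2 → Set (EuclideanSpace ℝ (Fin d))),
      (∀ c, IsConvexPartitionLE (f c)) ∧
      (∀ P : Fin 2 → Set (EuclideanSpace ℝ (Fin d)),
        IsConvexPartitionLE P → ∃! c, f c = P) ∧
      (∀ c, ∀ ε : ℝ, 0 < ε → ∃ δ : ℝ, 0 < δ ∧ ∀ c', dist c c' < δ →
        ∑ i, (μ (symmDiff (f c i) (f c' i))).toReal < ε) ∧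
      (∀ c, ∀ ε : ℝ, 0 < ε → ∃ δ : ℝ, 0 < δ ∧ ∀ c',
        ∑ i, (μ (symmDiff (f c i) (f c' i))).toReal < δ → dist c c' < ε) ∧
      ∃ c₁ c₂ : (Metric.sphere (0 : EuclideanSpace ℝ (Fin (d + 1))) 1),
        c₁ ≠ c₂ ∧
        (∀ c, IsConvexPartition (f c) ↔ (c ≠ c₁ ∧ c ≠ c₂)) ∧
        Nonempty (ContinuousMap.HomotopyEquiv
          {c : (Metric.sphere (0 : EuclideanSpace ℝ (Fin (d + 1))) 1) // c ≠ c₁ ∧ c ≠ c₂}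
          (Metric.sphere (0 : EuclideanSpace ℝ (Fin d)) 1)) :=
  space_of_two_partitions_general d μ hpos hplane
end
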